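/- Let q ≥ 1 and let A be an irreducible stochastic matrix which is positive recurrent, i.e. there exists an invariant probability vector u ∈ l^1 (u_i ≥ 0, Σ_i u_i = 1, Σ_i u_i A_{i,j} = u_j for every j), and suppose A acts as a bounded linear operator on l^q. Then A is not supercyclic on l^q. -/

import Mathlib

open Filter

/-- Action of an infinite matrix `A` on a complex sequence: `(A x)_i = ∑_j A_{i,j} x_j`. -/
noncomputable def matAct (A : ℕ → ℕ → ℝ) (x : ℕ → ℂ) : ℕ → ℂ :=
  fun i => ∑' j, (A i j : ℂ) * x j

/-- Entries of the `n`-th matrix power of `A`. -/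
noncomputable def matPow (A : ℕ → ℕ → ℝ) : ℕ → ℕ → ℕ → ℝ
  | 0, i, j => if i = j then 1 else 0
  | n + 1, i, j => ∑' k, A i k * matPow A n k j

/-- Membership in `ℓ^q`: `∑ ‖x n‖^q < ∞`. -/
def memlq (q : ℝ) (x : ℕ → ℂ) : Prop := Summable (fun n => ‖x n‖ ^ q)

/-- The `q`-th power of the `ℓ^q` distance between `x` and `z` is `< ε`. -/
def distLqlt (q : ℝ) (x z : ℕ → ℂ) (ε : ℝ) : Prop := (∑' i, ‖x i - z i‖ ^ q) < ε

/-- `T` is supercyclic on the space given by membership predicate `mem` with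
distance predicate `dlt`. -/
def SupercyclicOn (mem : (ℕ → ℂ) → Prop) (dlt : (ℕ → ℂ) → (ℕ → ℂ) → ℝ → Prop)
    (T : (ℕ → ℂ) → (ℕ → ℂ)) : Prop :=
  ∃ x, mem x ∧ ∀ z, mem z → ∀ ε : ℝ, 0 < ε →
    ∃ (lam : ℂ) (n : ℕ), dlt (fun i => lam * T^[n] x i) z ε

/-!
The invariant probability vector `u` gives the linear functional `φ x = ∑ uᵢ xᵢ` and the
seminorm `N x = ∑ uᵢ ‖xᵢ‖`, both dominated by the `ℓ^q` norm, with `φ ∘ A = φ` and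
`N ∘ A ≤ N`. If `c • Aⁿ x` is within `1/2` of a vector `z` with `φ z = 1`, then
`|c φ x - 1| < 1/2`, hence `|c| < 3 / (2 |φ x|)` and `N z < 1/2 + |c| N x`. Irreducibility
forces `u` to charge two states, so `φ z = 1` is compatible with `N z` arbitrarily large.
-/

open scoped ENNReal

section Lq

variable {q : ℝ} {x z : ℕ → ℂ}

theorem memlq_iff_memℓp (hq : 0 < q) : memlq q x ↔ Memℓp x (ENNReal.ofReal q) := by
  rw [memℓp_gen_iff (by rwa [ENNReal.toReal_ofReal hq.le]), ENNReal.toReal_ofReal hq.le]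
  rfl

theorem memlq.sub (hq : 0 < q) (hx : memlq q x) (hz : memlq q z) :
    memlq q (fun i => x i - z i) :=
  (memlq_iff_memℓp hq).2 (((memlq_iff_memℓp hq).1 hx).sub ((memlq_iff_memℓp hq).1 hz))

theorem memlq.const_mul (hq : 0 < q) (hx : memlq q x) (c : ℂ) : memlq q (fun i => c * x i) :=
  (memlq_iff_memℓp hq).2 (((memlq_iff_memℓp hq).1 hx).const_mul c)

theorem memlq.memℓp_infty (hq : 0 < q) (hx : memlq q x) : Memℓp x ∞ :=
  ((memlq_iff_memℓp hq).1 hx).of_exponent_ge le_top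

theorem memlq.norm_le_rpow_tsum (hq : 0 < q) (hx : memlq q x) (i : ℕ) :
    ‖x i‖ ≤ (∑' n, ‖x n‖ ^ q) ^ q⁻¹ := by
  have h : ‖x i‖ ^ q ≤ ∑' n, ‖x n‖ ^ q :=
    hx.le_tsum i fun j _ => Real.rpow_nonneg (norm_nonneg _) q
  calc ‖x i‖ = (‖x i‖ ^ q) ^ q⁻¹ := (Real.rpow_rpow_inv (norm_nonneg _) hq.ne').symm
    _ ≤ _ := by gcongr

end Lq

noncomputable def weightedSum (u : ℕ → ℝ) (x : ℕ → ℂ) : ℂ := ∑' i, (u i : ℂ) * x i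

noncomputable def weightedNorm (u : ℕ → ℝ) (x : ℕ → ℂ) : ℝ := ∑' i, u i * ‖x i‖

section Weighted

variable {u : ℕ → ℝ} {x y z : ℕ → ℂ}

theorem summable_mul_of_le {v : ℕ → ℝ} {B : ℝ} (hu_nn : ∀ i, 0 ≤ u i) (hu : Summable u)
    (hv_nn : ∀ i, 0 ≤ v i) (hv : ∀ i, v i ≤ B) : Summable fun i => u i * v i :=
  Summable.of_nonneg_of_le (fun i => mul_nonneg (hu_nn i) (hv_nn i))
    (fun i => mul_le_mul_of_nonneg_left (hv i) (hu_nn i)) (hu.mul_right B)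

theorem summable_weightedNorm (hu_nn : ∀ i, 0 ≤ u i) (hu : Summable u) (hx : Memℓp x ∞) :
    Summable fun i => u i * ‖x i‖ := by
  obtain ⟨B, hB⟩ := memℓp_infty_iff.1 hx
  exact summable_mul_of_le hu_nn hu (fun i => norm_nonneg _) fun i => hB ⟨i, rfl⟩

theorem norm_weight_mul (hu_nn : ∀ i, 0 ≤ u i) (i : ℕ) : ‖(u i : ℂ) * x i‖ = u i * ‖x i‖ := by
  rw [norm_mul, Complex.norm_real, Real.norm_of_nonneg (hu_nn i)]

theorem summable_weightedSum (hu_nn : ∀ i, 0 ≤ u i) (hu : Summable u) (hx : Memℓp x ∞) :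
    Summable fun i => (u i : ℂ) * x i :=
  .of_norm <| (summable_weightedNorm hu_nn hu hx).congr fun i => (norm_weight_mul hu_nn i).symm

theorem weightedNorm_nonneg (hu_nn : ∀ i, 0 ≤ u i) : 0 ≤ weightedNorm u x :=
  tsum_nonneg fun i => mul_nonneg (hu_nn i) (norm_nonneg _)

theorem norm_weightedSum_le (hu_nn : ∀ i, 0 ≤ u i) (hu : Summable u) (hx : Memℓp x ∞) :
    ‖weightedSum u x‖ ≤ weightedNorm u x := by
  refine (norm_tsum_le_tsum_norm ?_).trans_eq (tsum_congr fun i => norm_weight_mul hu_nn i)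
  exact (summable_weightedNorm hu_nn hu hx).congr fun i => (norm_weight_mul hu_nn i).symm

theorem weightedNorm_le_of_norm_le {B : ℝ} (hu_nn : ∀ i, 0 ≤ u i) (hu_sum : HasSum u 1)
    (hx : ∀ i, ‖x i‖ ≤ B) : weightedNorm u x ≤ B := by
  calc weightedNorm u x ≤ ∑' i, u i * B :=
        (summable_mul_of_le hu_nn hu_sum.summable (fun i => norm_nonneg _) hx).tsum_le_tsum
          (fun i => mul_le_mul_of_nonneg_left (hx i) (hu_nn i)) (hu_sum.summable.mul_right B)
    _ = B := by rw [tsum_mul_right, hu_sum.tsum_eq, one_mul]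

theorem weightedNorm_lt_of_tsum_rpow_lt {q ε : ℝ} (hq : 0 < q) (hε : 0 ≤ ε)
    (hu_nn : ∀ i, 0 ≤ u i) (hu_sum : HasSum u 1) (hx : memlq q x)
    (hlt : ∑' i, ‖x i‖ ^ q < ε ^ q) : weightedNorm u x < ε := by
  refine (weightedNorm_le_of_norm_le hu_nn hu_sum (hx.norm_le_rpow_tsum hq)).trans_lt ?_
  calc (∑' i, ‖x i‖ ^ q) ^ q⁻¹ < (ε ^ q) ^ q⁻¹ := by gcongr
    _ = ε := Real.rpow_rpow_inv hε hq.ne'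

theorem weightedSum_mul_sub (hu_nn : ∀ i, 0 ≤ u i) (hu : Summable u) (hy : Memℓp y ∞)
    (hz : Memℓp z ∞) (c : ℂ) :
    weightedSum u (fun i => c * y i - z i) = c * weightedSum u y - weightedSum u z := by
  unfold weightedSum
  rw [← tsum_mul_left, ← ((summable_weightedSum hu_nn hu hy).mul_left c).tsum_sub
    (summable_weightedSum hu_nn hu hz)]
  exact tsum_congr fun i => by ring

theorem weightedNorm_mul_sub_le (hu_nn : ∀ i, 0 ≤ u i) (hu : Summable u) (hy : Memℓp y ∞)
    (hz : Memℓp z ∞) (c : ℂ) :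
    weightedNorm u (fun i => c * y i - z i) ≤ ‖c‖ * weightedNorm u y + weightedNorm u z := by
  have hy' := (summable_weightedNorm hu_nn hu hy).mul_left ‖c‖
  have hz' := summable_weightedNorm hu_nn hu hz
  unfold weightedNorm
  rw [← tsum_mul_left, ← hy'.tsum_add hz']
  refine (summable_weightedNorm hu_nn hu ((hy.const_mul c).sub hz)).tsum_le_tsum
    (fun i => ?_) (hy'.add hz')
  calc u i * ‖c * y i - z i‖ ≤ u i * (‖c‖ * ‖y i‖ + ‖z i‖) := by
        gcongr
        · exact hu_nn i
        · exact (norm_sub_le _ _).trans_eq (by rw [norm_mul])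
    _ = _ := by ring

theorem weightedNorm_lt_of_weightedNorm_mul_sub_lt (hu_nn : ∀ i, 0 ≤ u i) (hu : Summable u)
    (hy : Memℓp y ∞) (hz : Memℓp z ∞) (hz1 : weightedSum u z = 1) {c : ℂ}
    (hw : weightedNorm u (fun i => c * y i - z i) < 1 / 2) :
    0 < ‖weightedSum u y‖ ∧
      weightedNorm u z < 1 / 2 + 3 / 2 * weightedNorm u y / ‖weightedSum u y‖ := by
  set w := fun i => c * y i - z i with hw_def
  have hw_mem : Memℓp w ∞ := (hy.const_mul c).sub hz
  have hφw : ‖c * weightedSum u y - 1‖ < 1 / 2 := by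
    rw [← hz1, ← weightedSum_mul_sub hu_nn hu hy hz]
    exact (norm_weightedSum_le hu_nn hu hw_mem).trans_lt hw
  have hlow : 1 / 2 < ‖c‖ * ‖weightedSum u y‖ := by
    have := norm_sub_norm_le (1 : ℂ) (c * weightedSum u y)
    rw [norm_one, norm_sub_rev, norm_mul] at this
    linarith
  have hup : ‖c‖ * ‖weightedSum u y‖ < 3 / 2 := by
    have := norm_sub_norm_le (c * weightedSum u y) 1
    rw [norm_one, norm_mul] at this
    linarith
  have ha : 0 < ‖weightedSum u y‖ := pos_of_mul_pos_right (by linarith) (norm_nonneg c)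
  have hc : ‖c‖ ≤ 3 / 2 / ‖weightedSum u y‖ := ((lt_div_iff₀ ha).2 hup).le
  have hNz : weightedNorm u z ≤ ‖c‖ * weightedNorm u y + weightedNorm u w := by
    have hz_eq : z = fun i => c * y i - w i := by
      funext i
      simp only [hw_def]
      ring
    conv_lhs => rw [hz_eq]
    exact weightedNorm_mul_sub_le hu_nn hu hy hw_mem c
  have hcN : ‖c‖ * weightedNorm u y ≤ 3 / 2 * weightedNorm u y / ‖weightedSum u y‖ := by
    rw [mul_div_right_comm]
    exact mul_le_mul_of_nonneg_right hc (weightedNorm_nonneg hu_nn)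
  exact ⟨ha, by linarith⟩

end Weighted

section Stochastic

variable {A : ℕ → ℕ → ℝ} {u : ℕ → ℝ}

theorem tsum_smul_tsum_smul_of_hasSum_mul {E : Type*} [NormedAddCommGroup E] [NormedSpace ℝ E]
    [CompleteSpace E] (hpos : ∀ i j, 0 ≤ A i j) (hrow : ∀ i, HasSum (fun j => A i j) 1)
    (hu_nn : ∀ i, 0 ≤ u i) (hu : Summable u) (hu_inv : ∀ j, HasSum (fun i => u i * A i j) (u j))
    {f : ℕ → E} {B : ℝ} (hf : ∀ j, ‖f j‖ ≤ B) :
    ∑' i, u i • ∑' j, A i j • f j = ∑' j, u j • f j := by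
  have hbound : ∀ i j, ‖u i • A i j • f j‖ ≤ u i * A i j * B := fun i j => by
    rw [norm_smul, norm_smul, Real.norm_of_nonneg (hu_nn i), Real.norm_of_nonneg (hpos i j),
      mul_assoc]
    gcongr
    · exact hu_nn i
    · exact hpos i j
    · exact hf j
  have hB : 0 ≤ B := (norm_nonneg _).trans (hf 0)
  have hG : Summable (Function.uncurry fun i j => u i * A i j * B) := by
    refine (summable_prod_of_nonneg fun p =>
      mul_nonneg (mul_nonneg (hu_nn p.1) (hpos p.1 p.2)) hB).2 ⟨fun i => ?_, ?_⟩
    · exact ((hrow i).summable.mul_left (u i)).mul_right B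
    · refine (hu.mul_right B).congr fun i => ?_
      change u i * B = ∑' j, u i * A i j * B
      rw [tsum_mul_right, tsum_mul_left, (hrow i).tsum_eq, mul_one]
  have hF : Summable (Function.uncurry fun i j => u i • A i j • f j) :=
    hG.of_norm_bounded fun p => hbound p.1 p.2
  calc ∑' i, u i • ∑' j, A i j • f j = ∑' i, ∑' j, u i • A i j • f j :=
        tsum_congr fun i => (tsum_const_smul'' (u i)).symm
    _ = ∑' j, ∑' i, u i • A i j • f j := hF.tsum_comm.symm
    _ = ∑' j, u j • f j := tsum_congr fun j => by
        simp only [smul_smul]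
        rw [(hu_inv j).summable.tsum_smul_const, (hu_inv j).tsum_eq]

theorem summable_and_tsum_mul_norm_le (hpos : ∀ i j, 0 ≤ A i j) (hrow : ∀ i, HasSum (fun j => A i j) 1)
    {x : ℕ → ℂ} {B : ℝ} (hx : ∀ j, ‖x j‖ ≤ B) (i : ℕ) :
    Summable (fun j => A i j * ‖x j‖) ∧ ∑' j, A i j * ‖x j‖ ≤ B := by
  have hsum := (hrow i).summable.mul_right B
  have hle : ∀ j, A i j * ‖x j‖ ≤ A i j * B := fun j => mul_le_mul_of_nonneg_left (hx j) (hpos i j)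
  have hs : Summable (fun j => A i j * ‖x j‖) :=
    hsum.of_nonneg_of_le (fun j => mul_nonneg (hpos i j) (norm_nonneg _)) hle
  refine ⟨hs, (hs.tsum_le_tsum hle hsum).trans_eq ?_⟩
  rw [tsum_mul_right, (hrow i).tsum_eq, one_mul]

theorem norm_matAct_le_tsum (hpos : ∀ i j, 0 ≤ A i j) (hrow : ∀ i, HasSum (fun j => A i j) 1)
    {x : ℕ → ℂ} {B : ℝ} (hx : ∀ j, ‖x j‖ ≤ B) (i : ℕ) :
    ‖matAct A x i‖ ≤ ∑' j, A i j * ‖x j‖ := by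
  have hnorm : ∀ j, ‖(A i j : ℂ) * x j‖ = A i j * ‖x j‖ := fun j => by
    rw [norm_mul, Complex.norm_real, Real.norm_of_nonneg (hpos i j)]
  refine (norm_tsum_le_tsum_norm ?_).trans_eq (tsum_congr hnorm)
  exact (summable_and_tsum_mul_norm_le hpos hrow hx i).1.congr fun j => (hnorm j).symm

theorem memℓp_infty_matAct (hpos : ∀ i j, 0 ≤ A i j) (hrow : ∀ i, HasSum (fun j => A i j) 1)
    {x : ℕ → ℂ} (hx : Memℓp x ∞) : Memℓp (matAct A x) ∞ := by
  obtain ⟨B, hB⟩ := memℓp_infty_iff.1 hx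
  have hxB : ∀ j, ‖x j‖ ≤ B := fun j => hB ⟨j, rfl⟩
  refine memℓp_infty_iff.2 ⟨B, ?_⟩
  rintro _ ⟨i, rfl⟩
  exact (norm_matAct_le_tsum hpos hrow hxB i).trans (summable_and_tsum_mul_norm_le hpos hrow hxB i).2

theorem weightedSum_matAct (hpos : ∀ i j, 0 ≤ A i j) (hrow : ∀ i, HasSum (fun j => A i j) 1)
    (hu_nn : ∀ i, 0 ≤ u i) (hu : Summable u) (hu_inv : ∀ j, HasSum (fun i => u i * A i j) (u j))
    {x : ℕ → ℂ} (hx : Memℓp x ∞) : weightedSum u (matAct A x) = weightedSum u x := by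
  obtain ⟨B, hB⟩ := memℓp_infty_iff.1 hx
  simp only [weightedSum, matAct, ← Complex.real_smul]
  exact tsum_smul_tsum_smul_of_hasSum_mul hpos hrow hu_nn hu hu_inv fun j => hB ⟨j, rfl⟩

theorem weightedNorm_matAct_le (hpos : ∀ i j, 0 ≤ A i j) (hrow : ∀ i, HasSum (fun j => A i j) 1)
    (hu_nn : ∀ i, 0 ≤ u i) (hu : Summable u) (hu_inv : ∀ j, HasSum (fun i => u i * A i j) (u j))
    {x : ℕ → ℂ} (hx : Memℓp x ∞) : weightedNorm u (matAct A x) ≤ weightedNorm u x := by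
  obtain ⟨B, hB⟩ := memℓp_infty_iff.1 hx
  have hxB : ∀ j, ‖x j‖ ≤ B := fun j => hB ⟨j, rfl⟩
  have hxnorm : ∀ j, ‖(‖x j‖ : ℝ)‖ ≤ B := fun j => by rw [norm_norm]; exact hxB j
  calc weightedNorm u (matAct A x) ≤ ∑' i, u i * ∑' j, A i j * ‖x j‖ :=
        (summable_weightedNorm hu_nn hu (memℓp_infty_matAct hpos hrow hx)).tsum_le_tsum
          (fun i => mul_le_mul_of_nonneg_left (norm_matAct_le_tsum hpos hrow hxB i) (hu_nn i))
          (summable_mul_of_le hu_nn hu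
            (fun i => tsum_nonneg fun j => mul_nonneg (hpos i j) (norm_nonneg _))
            fun i => (summable_and_tsum_mul_norm_le hpos hrow hxB i).2)
    _ = weightedNorm u x := by
        simpa only [smul_eq_mul, weightedNorm] using
          tsum_smul_tsum_smul_of_hasSum_mul hpos hrow hu_nn hu hu_inv hxnorm

theorem weightedSum_iterate_matAct (hpos : ∀ i j, 0 ≤ A i j)
    (hrow : ∀ i, HasSum (fun j => A i j) 1) (hu_nn : ∀ i, 0 ≤ u i) (hu : Summable u)
    (hu_inv : ∀ j, HasSum (fun i => u i * A i j) (u j)) {x : ℕ → ℂ} (hx : Memℓp x ∞) (n : ℕ) :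
    weightedSum u ((matAct A)^[n] x) = weightedSum u x := by
  induction n with
  | zero => rfl
  | succ n ih =>
    rw [Function.iterate_succ_apply', weightedSum_matAct hpos hrow hu_nn hu hu_inv
      (Function.Iterate.rec (Memℓp · ∞) hx (fun _ => memℓp_infty_matAct hpos hrow) n), ih]

theorem weightedNorm_iterate_matAct_le (hpos : ∀ i j, 0 ≤ A i j)
    (hrow : ∀ i, HasSum (fun j => A i j) 1) (hu_nn : ∀ i, 0 ≤ u i) (hu : Summable u)
    (hu_inv : ∀ j, HasSum (fun i => u i * A i j) (u j)) {x : ℕ → ℂ} (hx : Memℓp x ∞) (n : ℕ) :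
    weightedNorm u ((matAct A)^[n] x) ≤ weightedNorm u x := by
  induction n with
  | zero => rfl
  | succ n ih =>
    rw [Function.iterate_succ_apply']
    exact (weightedNorm_matAct_le hpos hrow hu_nn hu hu_inv
      (Function.Iterate.rec (Memℓp · ∞) hx (fun _ => memℓp_infty_matAct hpos hrow) n)).trans ih

theorem matPow_eq_zero_of_absorbing {k : ℕ} (hk : ∀ j, j ≠ k → A k j = 0) (hkk : A k k = 1)
    (n : ℕ) {j : ℕ} (hj : j ≠ k) : matPow A n k j = 0 := by
  induction n with
  | zero => simp [matPow, hj.symm]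
  | succ n ih =>
    rw [matPow, tsum_eq_single k fun m hm => by rw [hk m hm, zero_mul], hkk, one_mul, ih]

/-- Otherwise the only charged state would be absorbing, contradicting irreducibility. -/
theorem exists_ne_pos_of_irreducible (hpos : ∀ i j, 0 ≤ A i j)
    (hrow : ∀ i, HasSum (fun j => A i j) 1) (hirr : ∀ i j, ∃ n, 0 < matPow A n i j)
    (hu_nn : ∀ i, 0 ≤ u i) (hu_sum : HasSum u 1)
    (hu_inv : ∀ j, HasSum (fun i => u i * A i j) (u j)) :
    ∃ k l, k ≠ l ∧ 0 < u k ∧ 0 < u l := by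
  obtain ⟨k, hk⟩ : ∃ k, 0 < u k := by
    by_contra! h
    have := hasSum_le h hu_sum hasSum_zero
    norm_num at this
  by_contra! h
  have hAk : ∀ j, j ≠ k → A k j = 0 := fun j hj => by
    have hle : u k * A k j ≤ u j :=
      le_hasSum (hu_inv j) k fun m _ => mul_nonneg (hu_nn m) (hpos m j)
    have := h k j hj.symm hk
    nlinarith [hpos k j]
  have hkk : A k k = 1 := ((hrow k).unique (hasSum_single k hAk)).symm
  obtain ⟨n, hn⟩ := hirr k (k + 1)
  exact hn.ne' (matPow_eq_zero_of_absorbing hAk hkk n (by omega))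

end Stochastic

theorem exists_weightedSum_eq_one_weightedNorm_eq {q : ℝ} (hq : 0 < q) {u : ℕ → ℝ} {k l : ℕ}
    (hkl : k ≠ l) (hk : 0 < u k) (hl : 0 < u l) {R : ℝ} (hR : 1 ≤ R) :
    ∃ z, memlq q z ∧ weightedSum u z = 1 ∧ weightedNorm u z = R := by
  set a := (R + 1) / (2 * u k) with ha
  set b := (R - 1) / (2 * u l) with hb
  have hua : u k * a = (R + 1) / 2 := by rw [ha]; field_simp
  have hub : u l * b = (R - 1) / 2 := by rw [hb]; field_simp
  set z : ℕ → ℂ := fun i => if i = k then (a : ℂ) else if i = l then -(b : ℂ) else 0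
  have hsupp : ∀ i ∉ ({k, l} : Finset ℕ), z i = 0 := fun i hi => by
    simp only [Finset.mem_insert, Finset.mem_singleton, not_or] at hi
    simp [z, hi.1, hi.2]
  refine ⟨z, ?_, ?_, ?_⟩
  · exact summable_of_ne_finset_zero fun i hi => by
      rw [hsupp i hi, norm_zero, Real.zero_rpow hq.ne']
  · rw [weightedSum, tsum_eq_sum fun i hi => by rw [hsupp i hi, mul_zero], Finset.sum_pair hkl]
    simp only [z, if_true, if_neg hkl.symm]
    rw [mul_neg, ← sub_eq_add_neg, ← Complex.ofReal_mul, ← Complex.ofReal_mul, hua, hub]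
    push_cast
    ring
  · rw [weightedNorm, tsum_eq_sum fun i hi => by rw [hsupp i hi, norm_zero, mul_zero],
      Finset.sum_pair hkl]
    have hb0 : 0 ≤ b := div_nonneg (by linarith) (by positivity)
    simp only [z, if_true, if_neg hkl.symm, norm_neg, Complex.norm_real,
      Real.norm_of_nonneg (by positivity : 0 ≤ a), Real.norm_of_nonneg hb0, hua, hub]
    ring

theorem stmt5_general (q : ℝ) (hq : 1 ≤ q) (A : ℕ → ℕ → ℝ)
    (hpos : ∀ i j, 0 ≤ A i j)
    (hrow : ∀ i, HasSum (fun j => A i j) 1)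
    (hirr : ∀ i j, ∃ n, 0 < matPow A n i j)
    (u : ℕ → ℝ) (hu_nn : ∀ i, 0 ≤ u i) (hu_sum : HasSum u 1)
    (hu_inv : ∀ j, HasSum (fun i => u i * A i j) (u j))
    (hmap : ∀ x, memlq q x → memlq q (matAct A x)) :
    ¬ SupercyclicOn (memlq q) (distLqlt q) (matAct A) := by
  have hq0 : 0 < q := by linarith
  have hu := hu_sum.summable
  rintro ⟨x, hx, hdense⟩
  obtain ⟨k, l, hkl, hk, hl⟩ := exists_ne_pos_of_irreducible hpos hrow hirr hu_nn hu_sum hu_inv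
  set a := ‖weightedSum u x‖
  set Nx := weightedNorm u x
  have hNx_div : 0 ≤ Nx / a := div_nonneg (weightedNorm_nonneg hu_nn) (norm_nonneg _)
  obtain ⟨z, hz, hz1, hzN⟩ :=
    exists_weightedSum_eq_one_weightedNorm_eq (R := 1 + 2 * (Nx / a)) hq0 hkl hk hl (by linarith)
  obtain ⟨c, n, hd⟩ := hdense z hz ((1 / 2) ^ q) (by positivity)
  set y := (matAct A)^[n] x
  -- `distLqlt` only controls `c • y - z` once that series is known to converge (`tsum` junk `0`).
  have hy : memlq q y := Function.Iterate.rec (memlq q) hx hmap n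
  have hw := weightedNorm_lt_of_tsum_rpow_lt hq0 (by norm_num) hu_nn hu_sum
    ((hy.const_mul hq0 c).sub hq0 hz) hd
  obtain ⟨ha, hzN'⟩ := weightedNorm_lt_of_weightedNorm_mul_sub_lt hu_nn hu
    (hy.memℓp_infty hq0) (hz.memℓp_infty hq0) hz1 hw
  have hxb := hx.memℓp_infty hq0
  rw [weightedSum_iterate_matAct hpos hrow hu_nn hu hu_inv hxb] at ha hzN'
  have hyN : 3 / 2 * weightedNorm u y / a ≤ 3 / 2 * (Nx / a) := by
    rw [mul_div_assoc]
    gcongr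
    exact weightedNorm_iterate_matAct_le hpos hrow hu_nn hu hu_inv hxb n
  linarith

/-- Let `q ≥ 1` and let `A` be an irreducible stochastic matrix which is positive
recurrent (has an invariant probability vector `u ∈ l¹`), acting as a bounded linear
operator on `ℓ^q`.  Then `A` is not supercyclic on `ℓ^q`. -/
theorem stmt5 (q : ℝ) (hq : 1 ≤ q) (A : ℕ → ℕ → ℝ)
    (hpos : ∀ i j, 0 ≤ A i j)
    (hrow : ∀ i, HasSum (fun j => A i j) 1)
    (hirr : ∀ i j, ∃ n, 0 < matPow A n i j)
    (u : ℕ → ℝ) (hu_nn : ∀ i, 0 ≤ u i) (hu_sum : HasSum u 1)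
    (hu_inv : ∀ j, HasSum (fun i => u i * A i j) (u j))
    (hmap : ∀ x, memlq q x → memlq q (matAct A x))
    (hbdd : ∃ C : ℝ, ∀ x, memlq q x →
      (∑' n, ‖matAct A x n‖ ^ q) ^ (1/q) ≤ C * (∑' n, ‖x n‖ ^ q) ^ (1/q)) :
    ¬ SupercyclicOn (memlq q) (distLqlt q) (matAct A) :=
  stmt5_general q hq A hpos hrow hirr u hu_nn hu_sum hu_inv hmap
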